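/- arXiv:1807.01804 — 4 statements merged into one kernel-verified Lean document; each statement's English description precedes it below -/
import Mathlib

section
/- Let X_1,…,X_n be random variables with Σ_i E[X_i] = m, and suppose there is a constant C > 0 such that for each i, E[X_i]² ≤ E[X_i²] ≤ p_i·C where p = (p_1,…,p_n) is a probability distribution. Then C ≥ m²/‖p‖_{1/2}, where ‖p‖_{1/2} = (Σ_i √p_i)². -/
open Finset Real

lemma abs_le_sqrt_mul_sqrt_of_sq_le_mul {x a c : ℝ} (hc : 0 ≤ c) (h : x ^ 2 ≤ a * c) :
    |x| ≤ √a * √c :=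
  sqrt_mul' a hc ▸ abs_le_sqrt h

lemma sq_sum_le_mul_sq_sum_sqrt {ι : Type*} {t : Finset ι} {e p : ι → ℝ} {C : ℝ} (hC : 0 ≤ C)
    (h : ∀ i ∈ t, e i ^ 2 ≤ p i * C) :
    (∑ i ∈ t, e i) ^ 2 ≤ C * (∑ i ∈ t, √(p i)) ^ 2 := by
  have habs : |∑ i ∈ t, e i| ≤ (∑ i ∈ t, √(p i)) * √C :=
    calc |∑ i ∈ t, e i| ≤ ∑ i ∈ t, |e i| := abs_sum_le_sum_abs _ _
      _ ≤ ∑ i ∈ t, √(p i) * √C :=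
          sum_le_sum fun i hi => abs_le_sqrt_mul_sqrt_of_sq_le_mul hC (h i hi)
      _ = (∑ i ∈ t, √(p i)) * √C := (sum_mul ..).symm
  calc (∑ i ∈ t, e i) ^ 2 = |∑ i ∈ t, e i| ^ 2 := (sq_abs _).symm
    _ ≤ ((∑ i ∈ t, √(p i)) * √C) ^ 2 := pow_le_pow_left₀ (abs_nonneg _) habs 2
    _ = C * (∑ i ∈ t, √(p i)) ^ 2 := by rw [mul_pow, sq_sqrt hC, mul_comm]

theorem stationary_second_moment_lower_general (n : ℕ) (m C : ℝ) (e s p : Fin n → ℝ)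
    (hC : 0 < C)
    (he : ∑ i, e i = m)
    (h1 : ∀ i, (e i) ^ 2 ≤ s i) (h2 : ∀ i, s i ≤ p i * C) :
    m ^ 2 / (∑ i, Real.sqrt (p i)) ^ 2 ≤ C := by
  rw [← he]
  exact div_le_of_le_mul₀ (sq_nonneg _) hC.le
    (sq_sum_le_mul_sq_sum_sqrt hC.le fun i _ => (h1 i).trans (h2 i))

/-- Abstract stationarity bound: if `∑ E[X i] = m` and for each `i`,
`E[X i]² ≤ E[X i²] ≤ p i * C` for a probability distribution `p` and constant `C > 0`,
then `C ≥ m² / ‖p‖_{1/2}` where `‖p‖_{1/2} = (∑ √(p i))²`. -/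
theorem stationary_second_moment_lower (n : ℕ) (m C : ℝ) (e s p : Fin n → ℝ)
    (hp0 : ∀ i, 0 ≤ p i) (hp1 : ∑ i, p i = 1) (hC : 0 < C)
    (he : ∑ i, e i = m)
    (h1 : ∀ i, (e i) ^ 2 ≤ s i) (h2 : ∀ i, s i ≤ p i * C) :
    m ^ 2 / (∑ i, Real.sqrt (p i)) ^ 2 ≤ C :=
  stationary_second_moment_lower_general n m C e s p hC he h1 h2
end

section
/- Let p be a probability distribution on n bins and X a configuration of m balls (X_j ≥ 0 integers, Σ X_j = m). Define Z(X) = Σ_j X_j²/p_j (assuming all p_j > 0). If bin ℓ is emptied and its X_ℓ = r balls are rethrown i.i.d. according to p, then the expected value of Z of the new configuration equals Z(X) − (1 + 1/p_ℓ)·r² + (2m + n − 1)·r. -/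
/-! The new configuration is `y + B`, where `y` is `X` with bin `ℓ` emptied. For any fixed `y`,
expanding `(y j + B j)² / p j` and inserting the first two moments of `B j` gives
`E[Z(y + B)] = Z(y) + 2 r ∑ y + (n - 1) r + r²`, because `∑ (1 - p j) = n - 1` and
`∑ p j = 1`. It remains to substitute `Z(y) = Z(X) - r² / p ℓ` and `∑ y = m - r`. -/

open Finset

theorem Finset.sum_update_eq_sub_add {ι M : Type*} [Fintype ι] [DecidableEq ι] [AddCommGroup M]
    (f : ι → M) (i : ι) (b : M) :
    ∑ j, Function.update f i b j = ∑ j, f j - f i + b := by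
  rw [sum_update_of_mem (mem_univ i), sum_eq_add_sum_sdiff_singleton_of_mem (mem_univ i) f]
  abel

theorem sum_mul_add_sq {α R : Type*} [Fintype α] [CommSemiring R] (w b : α → R) (y : R) :
    ∑ a, w a * (y + b a) ^ 2
      = y ^ 2 * ∑ a, w a + 2 * y * ∑ a, w a * b a + ∑ a, w a * b a ^ 2 := by
  simp only [mul_sum, ← sum_add_distrib]
  exact sum_congr rfl fun a _ => by ring

theorem sum_mul_sum_add_sq_div {ι α : Type*} [Fintype ι] [Fintype α] (p : ι → ℝ)
    (hp : ∀ j, p j ≠ 0) (hp1 : ∑ j, p j = 1) (w : α → ℝ) (hw1 : ∑ a, w a = 1)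
    (B : ι → α → ℝ) (r : ℝ) (hB1 : ∀ j, ∑ a, w a * B j a = p j * r)
    (hB2 : ∀ j, ∑ a, w a * B j a ^ 2 = p j * (1 - p j) * r + p j ^ 2 * r ^ 2) (y : ι → ℝ) :
    ∑ a, w a * ∑ j, (y j + B j a) ^ 2 / p j
      = ∑ j, y j ^ 2 / p j + 2 * r * ∑ j, y j + (Fintype.card ι - 1) * r + r ^ 2 := by
  have bin : ∀ j, ∑ a, w a * ((y j + B j a) ^ 2 / p j)
      = y j ^ 2 / p j + 2 * r * y j + r - r * p j + r ^ 2 * p j := by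
    intro j
    simp only [← mul_div_assoc, ← sum_div, sum_mul_add_sq, hw1, hB1, hB2]
    field_simp [hp j]
    ring
  simp only [mul_sum]
  rw [sum_comm]
  simp only [← mul_sum, bin, sum_add_distrib, sum_sub_distrib, ← mul_sum, hp1, sum_const,
    card_univ, nsmul_eq_mul]
  ring

theorem expected_potential_after_recycle_general (n m : ℕ) (p : Fin n → ℝ)
    (hp : ∀ j, 0 < p j) (hp1 : ∑ j, p j = 1)
    (X : Fin n → ℕ) (hX : ∑ j, X j = m) (ℓ : Fin n) (r : ℕ) (hr : X ℓ = r)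
    (α : Type*) [Fintype α] (w : α → ℝ) (B : Fin n → α → ℕ)
    (hw1 : ∑ a, w a = 1)
    (hB1 : ∀ j, ∑ a, w a * (B j a : ℝ) = p j * r)
    (hB2 : ∀ j, ∑ a, w a * (B j a : ℝ) ^ 2 = p j * (1 - p j) * r + (p j) ^ 2 * (r : ℝ) ^ 2) :
    ∑ a, w a * (∑ j, (if j = ℓ then (B j a : ℝ) else (X j : ℝ) + (B j a : ℝ)) ^ 2 / p j)
      = (∑ j, (X j : ℝ) ^ 2 / p j) - (1 + 1 / p ℓ) * (r : ℝ) ^ 2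
        + (2 * m + n - 1) * r := by
  set Y : Fin n → ℝ := Function.update (fun j => (X j : ℝ)) ℓ 0
  have hnew : ∀ a j, (if j = ℓ then (B j a : ℝ) else (X j : ℝ) + (B j a : ℝ)) = Y j + B j a := by
    intro a j
    by_cases h : j = ℓ <;> simp [Y, h]
  have hZ : ∑ j, Y j ^ 2 / p j = ∑ j, (X j : ℝ) ^ 2 / p j - r ^ 2 / p ℓ := by
    simp only [Y, Function.apply_update (fun j (x : ℝ) => x ^ 2 / p j), Finset.sum_update_eq_sub_add, hr]
    ring
  have hsum : ∑ j, Y j = m - r := by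
    simp only [Y, Finset.sum_update_eq_sub_add, hr, ← hX]
    push_cast
    ring
  simp only [hnew]
  rw [sum_mul_sum_add_sq_div p (fun j => (hp j).ne') hp1 w hw1 (fun j a => (B j a : ℝ)) r hB1 hB2,
    hZ, hsum, Fintype.card_fin]
  ring

/-- Potential-function computation: if bin `ℓ` of configuration `X` (with `m` balls,
`X ℓ = r`) is emptied and its `r` balls are rethrown i.i.d. according to `p` — so the
vector `B` of landing counts satisfies `∑ j, B j = r`, `E[B j] = p j r` and
`E[(B j)²] = p j (1 - p j) r + p j² r²` — then for `Z(X) = ∑ j, X j²/p j`, the expected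
value of `Z` of the new configuration equals
`Z(X) - (1 + 1/p ℓ) r² + (2m + n - 1) r`. -/
theorem expected_potential_after_recycle (n m : ℕ) (p : Fin n → ℝ)
    (hp : ∀ j, 0 < p j) (hp1 : ∑ j, p j = 1)
    (X : Fin n → ℕ) (hX : ∑ j, X j = m) (ℓ : Fin n) (r : ℕ) (hr : X ℓ = r)
    (α : Type*) [Fintype α] (w : α → ℝ) (B : Fin n → α → ℕ)
    (hw0 : ∀ a, 0 ≤ w a) (hw1 : ∑ a, w a = 1)
    (hBsum : ∀ a, ∑ j, B j a = r)
    (hB1 : ∀ j, ∑ a, w a * (B j a : ℝ) = p j * r)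
    (hB2 : ∀ j, ∑ a, w a * (B j a : ℝ) ^ 2 = p j * (1 - p j) * r + (p j) ^ 2 * (r : ℝ) ^ 2) :
    ∑ a, w a * (∑ j, (if j = ℓ then (B j a : ℝ) else (X j : ℝ) + (B j a : ℝ)) ^ 2 / p j)
      = (∑ j, (X j : ℝ) ^ 2 / p j) - (1 + 1 / p ℓ) * (r : ℝ) ^ 2
        + (2 * m + n - 1) * r :=
  expected_potential_after_recycle_general n m p hp hp1 X hX ℓ r hr α w B hw1 hB1 hB2
end

section
/- Let χ be the stationary distribution of the Random Ball strategy on the uniform ball-recycling game with m balls and n bins, let R(χ) be the number of balls recycled in one step, and R = E[R(χ)]. Then E[R(χ)²]/R = (2m + n − 1)/(n + 1) ≤ 1 + 2m/n. -/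
open Finset

/-- A configuration of `m` balls in `n` bins. -/
abbrev Config (n m : ℕ) := {X : Fin n → Fin (m + 1) // ∑ i, (X i : ℕ) = m}

/-- Probability that rethrowing `r` balls i.i.d. according to `p` produces landing
counts `d` (multinomial probability). -/
noncomputable def throwProb {n : ℕ} (p : Fin n → ℝ) (r : ℕ) (d : Fin n → ℕ) : ℝ :=
  if ∑ j, d j = r then (r.factorial : ℝ) * ∏ j, p j ^ d j / ((d j).factorial : ℝ) else 0

/-- One-step transition probability of a (stateless, possibly randomized) recycling
strategy `σ`: pick a bin `b` with probability `σ X b`, empty it, and rethrow its balls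
i.i.d. according to `p`. -/
noncomputable def transStep {n m : ℕ} (p : Fin n → ℝ)
    (σ : Config n m → Fin n → ℝ) (X Y : Config n m) : ℝ :=
  ∑ b, σ X b *
    (if ∀ j, j ≠ b → (X.1 j : ℕ) ≤ (Y.1 j : ℕ) then
      throwProb p (X.1 b : ℕ)
        (fun j => (Y.1 j : ℕ) - if j = b then 0 else (X.1 j : ℕ))
     else 0)

/-- `σ` is a valid recycling strategy: it gives a probability distribution over bins
and only picks non-empty bins. -/
def IsStrategy {n m : ℕ} (σ : Config n m → Fin n → ℝ) : Prop :=
  (∀ X b, 0 ≤ σ X b) ∧ (∀ X, ∑ b, σ X b = 1) ∧ (∀ X b, σ X b ≠ 0 → (X.1 b : ℕ) ≠ 0)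

/-- `π` is a stationary distribution of the chain induced by strategy `σ`. -/
def IsStationaryDist {n m : ℕ} (p : Fin n → ℝ) (σ : Config n m → Fin n → ℝ)
    (π : Config n m → ℝ) : Prop :=
  (∀ X, 0 ≤ π X) ∧ (∑ X, π X = 1) ∧ (∀ Y, ∑ X, π X * transStep p σ X Y = π Y)

/-!
Track the potential `Φ X = ∑ j, X j ^ 2 = m + 2 · #(same-bin pairs of balls)`. When a bin
holding `r` balls is recycled, the `r` balls land multinomially, with `E[d j] = r/n` and
`E[d j (d j - 1)] = r (r - 1)/n²` (factorial moments, obtained by re-indexing along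
`d ↦ d + e_j`). Hence `Φ` changes in expectation by
`r (1 + (2m - 1)/n) - r² (1 + 1/n)`. Random Ball recycles bin `b` with probability `X b / m`,
and under a stationary distribution the expected change of `Φ` is zero, so
`(1 + 1/n) E[R²] = (1 + (2m - 1)/n) E[R]`; finally `E[R] ≥ 1` since `X b ≤ X b ^ 2`.
-/

section PiAntidiag

variable {ι M : Type*} [Fintype ι] [DecidableEq ι] [AddCommMonoid M]

theorem Fintype.sum_update_add_apply (f : ι → M) (j : ι) (b : M) :
    ∑ i, Function.update f j b i + f j = ∑ i, f i + b := by
  rw [sum_update_of_mem (mem_univ j), sum_eq_add_sum_sdiff_singleton_of_mem (mem_univ j) f]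
  abel

theorem Fintype.sum_ite_eq_zero_sub {G : Type*} [AddCommGroup G] (g : ι → G) (b : ι) :
    ∑ j, (if j = b then 0 else g j) = ∑ j, g j - g b := by
  simpa [Function.update_apply] using eq_sub_of_add_eq (Fintype.sum_update_add_apply g b 0)

theorem Finset.sum_piAntidiag_succ_filter_ne_zero (j : ι) (r : ℕ) (F : (ι → ℕ) → M) :
    ∑ d ∈ (piAntidiag univ (r + 1)).filter (fun d => d j ≠ 0), F d
      = ∑ e ∈ piAntidiag univ r, F (Function.update e j (e j + 1)) := by
  symm
  refine sum_nbij' (fun e => Function.update e j (e j + 1))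
    (fun d => Function.update d j (d j - 1)) ?_ ?_ ?_ ?_ fun _ _ => rfl
  · intro e he
    have := Fintype.sum_update_add_apply e j (e j + 1)
    simp only [mem_piAntidiag, mem_filter, mem_univ, implies_true, and_true] at he this ⊢
    exact ⟨by linarith, by simp⟩
  · intro d hd
    have := Fintype.sum_update_add_apply d j (d j - 1)
    simp only [mem_piAntidiag, mem_filter, mem_univ, implies_true, and_true] at hd this ⊢
    have : d j - 1 + 1 = d j := Nat.sub_add_cancel (Nat.one_le_iff_ne_zero.2 hd.2)
    linarith
  · intro e _
    simp
  · intro d hd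
    rw [mem_filter] at hd
    simp [Nat.sub_add_cancel (Nat.one_le_iff_ne_zero.2 hd.2)]

/- The decidability instance is a binder, so that the lemma also rewrites `if`s over `Fin n`,
whose instance is `Nat.decidableForallFin` rather than `Fintype.decidableForallFintype`. -/
theorem Finset.sum_piAntidiag_ite_le (c : ι → ℕ)
    [DecidablePred fun e : ι → ℕ => ∀ j, c j ≤ e j] {m : ℕ} (hc : ∑ j, c j ≤ m)
    (g : (ι → ℕ) → M) :
    ∑ e ∈ piAntidiag univ m, (if ∀ j, c j ≤ e j then g e else 0)
      = ∑ d ∈ piAntidiag univ (m - ∑ j, c j), g (fun j => c j + d j) := by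
  rw [← sum_filter]
  symm
  refine sum_nbij' (fun d j => c j + d j) (fun e j => e j - c j) ?_ ?_ ?_ ?_ fun _ _ => rfl
  · intro d hd
    simp only [mem_piAntidiag, mem_filter, mem_univ, implies_true, and_true] at hd ⊢
    rw [sum_add_distrib, hd]
    exact ⟨by omega, fun j => Nat.le_add_right _ _⟩
  · intro e he
    simp only [mem_piAntidiag, mem_filter, mem_univ, implies_true, and_true] at he ⊢
    rw [sum_tsub_distrib _ fun j _ => he.2 j, he.1]
  · intro d _
    simp
  · intro e he
    simp only [mem_filter] at he
    funext j
    exact Nat.add_sub_cancel' (he.2 j)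

end PiAntidiag

section Multinomial

variable {n : ℕ}

theorem throwProb_eq_multinomial (p : Fin n → ℝ) {r : ℕ} {d : Fin n → ℕ}
    (hd : d ∈ piAntidiag univ r) :
    throwProb p r d = Nat.multinomial univ d * ∏ j, p j ^ d j := by
  rw [mem_piAntidiag] at hd
  have hspec := Nat.multinomial_spec univ d
  rw [hd.1] at hspec
  rw [throwProb, if_pos hd.1, ← hspec, prod_div_distrib]
  push_cast
  field_simp

theorem sum_throwProb (p : Fin n → ℝ) (r : ℕ) :
    ∑ d ∈ piAntidiag univ r, throwProb p r d = (∑ j, p j) ^ r := by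
  rw [sum_pow_eq_sum_piAntidiag]
  exact sum_congr rfl fun d hd => throwProb_eq_multinomial p hd

theorem throwProb_update_succ (p : Fin n → ℝ) (r : ℕ) (d : Fin n → ℕ) (j : Fin n) :
    throwProb p (r + 1) (Function.update d j (d j + 1)) * (d j + 1)
      = (r + 1) * p j * throwProb p r d := by
  set e := Function.update d j (d j + 1)
  have hne : ∀ i ∈ univ.erase j, e i = d i := fun i hi =>
    Function.update_of_ne (ne_of_mem_erase hi) _ _
  have hj : e j = d j + 1 := Function.update_self ..
  have hsum : ∑ i, e i = ∑ i, d i + 1 := by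
    have := Fintype.sum_update_add_apply d j (d j + 1)
    linarith
  have hprod : ∏ i ∈ univ.erase j, p i ^ e i / ((e i).factorial : ℝ)
      = ∏ i ∈ univ.erase j, p i ^ d i / ((d i).factorial : ℝ) :=
    prod_congr rfl fun i hi => by rw [hne i hi]
  unfold throwProb
  rw [hsum]
  by_cases h : ∑ i, d i = r
  · rw [if_pos (by rw [h]), if_pos h, ← mul_prod_erase _ _ (mem_univ j),
      ← mul_prod_erase _ (fun i => p i ^ d i / ((d i).factorial : ℝ)) (mem_univ j), hprod, hj]
    push_cast [Nat.factorial_succ]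
    field_simp
    ring
  · rw [if_neg (by omega), if_neg h]
    ring

theorem sum_throwProb_succ_mul_apply (p : Fin n → ℝ) (j : Fin n) (r : ℕ) (w : ℕ → ℝ) :
    ∑ d ∈ piAntidiag univ (r + 1), throwProb p (r + 1) d * (d j * w (d j))
      = (r + 1) * p j * ∑ d ∈ piAntidiag univ r, throwProb p r d * w (d j + 1) := by
  rw [← sum_filter_of_ne (p := fun d => d j ≠ 0) fun d _ h hd => h (by simp [hd]),
    sum_piAntidiag_succ_filter_ne_zero, mul_sum]
  refine sum_congr rfl fun e _ => ?_
  rw [Function.update_self]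
  push_cast
  linear_combination w (e j + 1) * throwProb_update_succ p r e j

variable {p : Fin n → ℝ}

theorem sum_throwProb_eq_one (hp : ∑ j, p j = 1) (r : ℕ) :
    ∑ d ∈ piAntidiag univ r, throwProb p r d = 1 := by
  rw [sum_throwProb, hp, one_pow]

theorem sum_throwProb_mul_apply (hp : ∑ j, p j = 1) (j : Fin n) (r : ℕ) :
    ∑ d ∈ piAntidiag univ r, throwProb p r d * d j = r * p j := by
  cases r with
  | zero => simp
  | succ r =>
    have h := sum_throwProb_succ_mul_apply p j r fun _ => 1
    simp only [mul_one] at h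
    rw [h, sum_throwProb_eq_one hp]
    push_cast
    ring

theorem sum_throwProb_mul_apply_mul_pred (hp : ∑ j, p j = 1) (j : Fin n) (r : ℕ) :
    ∑ d ∈ piAntidiag univ r, throwProb p r d * (d j * (d j - 1)) = r * (r - 1) * p j ^ 2 := by
  cases r with
  | zero => simp
  | succ r =>
    have h := sum_throwProb_succ_mul_apply p j r fun x => (x : ℝ) - 1
    simp only [Nat.cast_add, Nat.cast_one, add_sub_cancel_right] at h
    rw [h, sum_throwProb_mul_apply hp]
    push_cast
    ring

theorem sum_throwProb_mul_sum_add_sq (hp : ∑ j, p j = 1) (c : Fin n → ℕ) (r : ℕ) :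
    ∑ d ∈ piAntidiag univ r, throwProb p r d * ∑ j, ((c j + d j : ℕ) : ℝ) ^ 2
      = ∑ j, (c j : ℝ) ^ 2 + 2 * r * ∑ j, c j * p j + r * (r - 1) * ∑ j, p j ^ 2 + r := by
  have hj : ∀ j, ∑ d ∈ piAntidiag univ r, throwProb p r d * ((c j + d j : ℕ) : ℝ) ^ 2
      = (c j : ℝ) ^ 2 + 2 * r * (c j * p j) + r * (r - 1) * p j ^ 2 + r * p j := by
    intro j
    calc ∑ d ∈ piAntidiag univ r, throwProb p r d * ((c j + d j : ℕ) : ℝ) ^ 2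
        = ∑ d ∈ piAntidiag univ r, ((c j : ℝ) ^ 2 * throwProb p r d
            + 2 * c j * (throwProb p r d * d j)
            + (throwProb p r d * (d j * (d j - 1)) + throwProb p r d * d j)) :=
          sum_congr rfl fun d _ => by push_cast; ring
      _ = _ := by
          rw [sum_add_distrib, sum_add_distrib, sum_add_distrib, ← mul_sum, ← mul_sum,
            sum_throwProb_eq_one hp, sum_throwProb_mul_apply hp,
            sum_throwProb_mul_apply_mul_pred hp]
          ring
  rw [sum_congr rfl fun d _ => mul_sum .., sum_comm]
  simp only [hj, sum_add_distrib, ← mul_sum, hp]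
  ring

end Multinomial

section Transition

variable {n m : ℕ}

theorem sum_config_eq_sum_piAntidiag (F : (Fin n → ℕ) → ℝ) :
    ∑ Y : Config n m, F (fun j => Y.1 j) = ∑ e ∈ piAntidiag univ m, F e := by
  refine sum_bij (fun Y _ j => Y.1 j) (fun Y _ => by simp [mem_piAntidiag, Y.2]) ?_ ?_
    fun _ _ => rfl
  · intro Y _ Z _ h
    exact Subtype.ext (funext fun j => Fin.ext (congrFun h j))
  · intro e he
    rw [mem_piAntidiag] at he
    have hle : ∀ j, e j < m + 1 := fun j =>
      Nat.lt_succ_of_le (he.1 ▸ single_le_sum (fun _ _ => Nat.zero_le _) (mem_univ j))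
    exact ⟨⟨fun j => ⟨e j, hle j⟩, he.1⟩, mem_univ _, rfl⟩

theorem sum_transStep_mul (p : Fin n → ℝ) (σ : Config n m → Fin n → ℝ) (X : Config n m)
    (f : (Fin n → ℕ) → ℝ) :
    ∑ Y, transStep p σ X Y * f (fun j => Y.1 j)
      = ∑ b, σ X b * ∑ d ∈ piAntidiag univ (X.1 b : ℕ),
          throwProb p (X.1 b) d * f (fun j => (if j = b then 0 else (X.1 j : ℕ)) + d j) := by
  simp only [transStep, sum_mul]
  rw [sum_comm]
  refine sum_congr rfl fun b _ => ?_
  have hc : ∑ j, (if j = b then 0 else (X.1 j : ℕ)) + X.1 b = m := by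
    simpa only [Function.update_apply, add_zero, X.2] using
      Fintype.sum_update_add_apply (fun j => (X.1 j : ℕ)) b 0
  have hcond : ∀ Y : Config n m, (∀ j, j ≠ b → (X.1 j : ℕ) ≤ Y.1 j)
      ↔ ∀ j, (if j = b then 0 else (X.1 j : ℕ)) ≤ Y.1 j := by
    refine fun Y => forall_congr' fun j => ?_
    by_cases h : j = b <;> simp [h]
  simp only [mul_assoc, ← mul_sum, hcond, ite_mul, zero_mul]
  have hXb : m - ∑ j, (if j = b then 0 else (X.1 j : ℕ)) = X.1 b := by omega
  rw [sum_config_eq_sum_piAntidiag (m := m) fun e =>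
      if ∀ j, (if j = b then 0 else (X.1 j : ℕ)) ≤ e j then
        throwProb p (X.1 b) (fun j => e j - if j = b then 0 else (X.1 j : ℕ)) * f e
      else 0,
    sum_piAntidiag_ite_le (fun j => if j = b then 0 else (X.1 j : ℕ)) (m := m) (by omega)
      fun e => throwProb p (X.1 b) (fun j => e j - if j = b then 0 else (X.1 j : ℕ)) * f e,
    hXb]
  simp

theorem sum_transStep_uniform_mul_sum_sq (hn : 0 < n) (σ : Config n m → Fin n → ℝ)
    (X : Config n m) :
    ∑ Y, transStep (fun _ => (1 : ℝ) / n) σ X Y * ∑ j, (Y.1 j : ℝ) ^ 2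
      = ∑ b, σ X b * (∑ j, (X.1 j : ℝ) ^ 2
          + (1 + (2 * m - 1) / n) * X.1 b - (1 + 1 / n) * (X.1 b : ℝ) ^ 2) := by
  have hn' : (n : ℝ) ≠ 0 := by positivity
  have hp : ∑ _j : Fin n, (1 : ℝ) / n = 1 := by simp [hn']
  have hX : ∑ j, (X.1 j : ℝ) = m := by exact_mod_cast X.2
  refine (sum_transStep_mul _ σ X fun e => ∑ j, (e j : ℝ) ^ 2).trans
    (sum_congr rfl fun b _ => congrArg (σ X b * ·) ?_)
  rw [sum_throwProb_mul_sum_add_sq hp]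
  simp only [Nat.cast_ite, Nat.cast_zero, ite_pow, ite_mul, zero_pow two_ne_zero, zero_mul,
    Fintype.sum_ite_eq_zero_sub, ← sum_mul, hX, sum_const, card_univ, Fintype.card_fin,
    nsmul_eq_mul]
  field_simp
  ring

end Transition

theorem IsStationaryDist.sum_mul_sum_transStep_mul {n m : ℕ} {p : Fin n → ℝ}
    {σ : Config n m → Fin n → ℝ} {π : Config n m → ℝ} (hπ : IsStationaryDist p σ π)
    (f : Config n m → ℝ) :
    ∑ X, π X * ∑ Y, transStep p σ X Y * f Y = ∑ Y, π Y * f Y := by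
  simp only [mul_sum]
  rw [sum_comm]
  refine sum_congr rfl fun Y _ => ?_
  rw [← hπ.2.2 Y, sum_mul]
  exact sum_congr rfl fun X _ => (mul_assoc ..).symm

section RandomBall

variable {n m : ℕ}

theorem Config.sum_cast_div_eq_one (hm : 0 < m) (X : Config n m) :
    ∑ b, (X.1 b : ℝ) / m = 1 := by
  rw [← sum_div, div_eq_one_iff_eq (by positivity)]
  exact_mod_cast X.2

theorem Config.one_le_sum_cast_div_mul_self (hm : 0 < m) (X : Config n m) :
    1 ≤ ∑ b, (X.1 b : ℝ) / m * X.1 b := by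
  rw [← X.sum_cast_div_eq_one hm]
  refine sum_le_sum fun b _ => ?_
  rw [div_mul_eq_mul_div]
  gcongr
  exact_mod_cast Nat.le_mul_self _

theorem sum_transStep_randomBall_mul_sum_sq (hn : 0 < n) (hm : 0 < m) (X : Config n m) :
    ∑ Y, transStep (fun _ => (1 : ℝ) / n) (fun Z b => (Z.1 b : ℝ) / m) X Y
        * ∑ j, (Y.1 j : ℝ) ^ 2
      = ∑ j, (X.1 j : ℝ) ^ 2 + (1 + (2 * m - 1) / n) * ∑ b, (X.1 b : ℝ) / m * X.1 b
        - (1 + 1 / n) * ∑ b, (X.1 b : ℝ) / m * (X.1 b : ℝ) ^ 2 := by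
  rw [sum_transStep_uniform_mul_sum_sq hn]
  simp only [mul_add, mul_sub, sum_add_distrib, sum_sub_distrib, ← sum_mul,
    X.sum_cast_div_eq_one hm, one_mul, mul_left_comm ((X.1 _ : ℝ) / m), ← mul_sum]

end RandomBall

/-- Pair-flow identity for Random Ball on the uniform distribution: in a stationary
distribution `π` of the Random Ball strategy (pick a uniformly random ball, recycle its
bin), the ratio of the second moment of the per-round recycle count to its mean equals
`(2m + n - 1)/(n + 1) ≤ 1 + 2m/n`. -/
theorem random_ball_pair_flow (n m : ℕ) (hn : 0 < n) (hm : 0 < m)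
    (π : Config n m → ℝ)
    (hπ : IsStationaryDist (fun _ : Fin n => (1 : ℝ) / n)
      (fun X b => (X.1 b : ℝ) / m) π) :
    (∑ X, π X * ∑ b, ((X.1 b : ℝ) / m) * (X.1 b : ℝ) ^ 2) /
      (∑ X, π X * ∑ b, ((X.1 b : ℝ) / m) * (X.1 b : ℝ))
      = (2 * m + n - 1) / (n + 1) ∧
    (2 * (m : ℝ) + n - 1) / (n + 1) ≤ 1 + 2 * m / n := by
  have hn' : (0 : ℝ) < n := by exact_mod_cast hn
  set A := ∑ X, π X * ∑ b, ((X.1 b : ℝ) / m) * (X.1 b : ℝ) ^ 2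
  set B := ∑ X, π X * ∑ b, ((X.1 b : ℝ) / m) * (X.1 b : ℝ)
  have hB : 1 ≤ B := calc
    1 = ∑ X, π X * 1 := by rw [← sum_mul, hπ.2.1, one_mul]
    _ ≤ B := sum_le_sum fun X _ =>
      mul_le_mul_of_nonneg_left (X.one_le_sum_cast_div_mul_self hm) (hπ.1 X)
  have hflow : (n + 1) * A = (2 * m + n - 1) * B := by
    have h := hπ.sum_mul_sum_transStep_mul fun Y => ∑ j, (Y.1 j : ℝ) ^ 2
    simp only [sum_transStep_randomBall_mul_sum_sq hn hm, mul_add, mul_sub, sum_add_distrib,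
      sum_sub_distrib, mul_left_comm (π _), ← mul_sum] at h
    have h' : (1 + 1 / n) * A = (1 + (2 * m - 1) / n) * B := by linarith
    field_simp at h'
    linarith
  constructor
  · rw [div_eq_div_iff (by positivity) (by positivity)]
    linarith
  · rw [div_le_iff₀ (by positivity)]
    have h : 2 * m / n * (n : ℝ) = 2 * m := div_mul_cancel₀ _ hn'.ne'
    nlinarith [show (0 : ℝ) ≤ 2 * m / n by positivity]
end

section
/- In the ball-recycling game with m balls and n bins and any distribution p with all p_i > 0, for any bin configurations X and Y and any recycling strategy, the probability of transitioning from X to Y within min(m,n) steps is at least some ε > 0 independent of the strategy; moreover every configuration can transition to itself in one step. -/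
/-!
Fix `δ ∈ (0, 1]` with `δ ≤ p j` for all `j`. A rethrow of `r ≤ m` balls producing a prescribed
outcome has probability at least `δ ^ r ≥ δ ^ m`, because the multinomial coefficient is at
least `1`. Whichever bin the strategy empties, its balls may all land in another occupied bin,
lowering the number of occupied bins, or, once few enough bins are occupied, back into their own
bin. After at most `min m n - 1` steps all balls share one bin, the strategy has to empty it, and
one more rethrow produces `Y`. Every step costs a factor `δ ^ m`.
-/

open Finset

/-- `π` is a stationary distribution of the chain induced by strategy `σ`. -/
def IsStationaryRecycling {n m : ℕ} (p : Fin n → ℝ) (σ : Config n m → Fin n → ℝ)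
    (π : Config n m → ℝ) : Prop :=
  (∀ X, 0 ≤ π X) ∧ (∑ X, π X = 1) ∧ (∀ Y, ∑ X, π X * transStep p σ X Y = π Y)

/-- `k`-step transition probability of the chain induced by strategy `σ`. -/
noncomputable def transPow {n m : ℕ} (p : Fin n → ℝ)
    (σ : Config n m → Fin n → ℝ) : ℕ → Config n m → Config n m → ℝ
  | 0 => fun X Y => if X = Y then 1 else 0
  | k + 1 => fun X Y => ∑ Z, transStep p σ X Z * transPow p σ k Z Y

namespace Recycling

variable {n m : ℕ}

lemma exists_pos_le_one_forall_le {ι : Type*} [Fintype ι] {f : ι → ℝ} (hf : ∀ i, 0 < f i) :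
    ∃ δ : ℝ, 0 < δ ∧ δ ≤ 1 ∧ ∀ i, δ ≤ f i := by
  classical
  have hpos : ∀ i, 0 < min (f i) 1 := fun i => lt_min (hf i) one_pos
  refine ⟨∏ i, min (f i) 1, prod_pos fun i _ => hpos i,
    prod_le_one (fun i _ => (hpos i).le) fun i _ => min_le_right _ _, fun i => ?_⟩
  calc ∏ j, min (f j) 1 = min (f i) 1 * ∏ j ∈ univ.erase i, min (f j) 1 :=
        (mul_prod_erase _ _ (mem_univ i)).symm
    _ ≤ min (f i) 1 * 1 := by
        gcongr
        · exact (hpos i).le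
        · exact prod_le_one (fun j _ => (hpos j).le) fun j _ => min_le_right _ _
    _ ≤ f i := by rw [mul_one]; exact min_le_left _ _

lemma throwProb_nonneg {p : Fin n → ℝ} (hp : ∀ i, 0 ≤ p i) (r : ℕ) (d : Fin n → ℕ) :
    0 ≤ throwProb p r d := by
  unfold throwProb
  split
  · exact mul_nonneg (Nat.cast_nonneg _) (prod_nonneg fun j _ =>
      div_nonneg (pow_nonneg (hp j) _) (Nat.cast_nonneg _))
  · exact le_rfl

lemma pow_le_throwProb {p : Fin n → ℝ} {δ : ℝ} (hδ : 0 ≤ δ) (hδp : ∀ j, δ ≤ p j) {r : ℕ}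
    {d : Fin n → ℕ} (hd : ∑ j, d j = r) : δ ^ r ≤ throwProb p r d := by
  have hp : ∀ j, 0 ≤ p j := fun j => hδ.trans (hδp j)
  have hfact : (r.factorial : ℝ) = Nat.multinomial univ d * ∏ j, ((d j).factorial : ℝ) := by
    rw [← hd, mul_comm]; exact_mod_cast (Nat.multinomial_spec univ d).symm
  calc δ ^ r = ∏ j, δ ^ d j := by rw [prod_pow_eq_pow_sum, hd]
    _ ≤ ∏ j, p j ^ d j := prod_le_prod (fun j _ => by positivity)
        fun j _ => pow_le_pow_left₀ hδ (hδp j) _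
    _ ≤ Nat.multinomial univ d * ∏ j, p j ^ d j :=
        le_mul_of_one_le_left (prod_nonneg fun j _ => pow_nonneg (hp j) _)
          (by exact_mod_cast Nat.multinomial_pos univ d)
    _ = throwProb p r d := by
        rw [throwProb, if_pos hd, hfact, mul_assoc, ← prod_mul_distrib]
        congr 1
        refine prod_congr rfl fun j _ => ?_
        field_simp

noncomputable def rethrowProb (p : Fin n → ℝ) (X : Config n m) (b : Fin n) (Y : Config n m) :
    ℝ :=
  if ∀ j, j ≠ b → (X.1 j : ℕ) ≤ (Y.1 j : ℕ) then
    throwProb p (X.1 b : ℕ) (fun j => (Y.1 j : ℕ) - if j = b then 0 else (X.1 j : ℕ))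
  else 0

lemma transStep_eq_sum_rethrowProb (p : Fin n → ℝ) (σ : Config n m → Fin n → ℝ)
    (X Y : Config n m) : transStep p σ X Y = ∑ b, σ X b * rethrowProb p X b Y :=
  rfl

lemma rethrowProb_nonneg {p : Fin n → ℝ} (hp : ∀ i, 0 ≤ p i) (X : Config n m) (b : Fin n)
    (Y : Config n m) : 0 ≤ rethrowProb p X b Y := by
  unfold rethrowProb
  split
  · exact throwProb_nonneg hp _ _
  · exact le_rfl

lemma val_add_sum_ite_ne (X : Config n m) (b : Fin n) :
    (X.1 b : ℕ) + ∑ j, (if j = b then 0 else (X.1 j : ℕ)) = m := by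
  refine Eq.trans ?_ X.2
  rw [sum_ite, sum_const_zero, zero_add, filter_ne']
  exact add_sum_erase _ (fun j => (X.1 j : ℕ)) (mem_univ b)

lemma pow_le_rethrowProb {p : Fin n → ℝ} {δ : ℝ} (hδ : 0 ≤ δ) (hδp : ∀ j, δ ≤ p j)
    {X Y : Config n m} {b : Fin n} (hXY : ∀ j, j ≠ b → (X.1 j : ℕ) ≤ (Y.1 j : ℕ)) :
    δ ^ (X.1 b : ℕ) ≤ rethrowProb p X b Y := by
  rw [rethrowProb, if_pos hXY]
  refine pow_le_throwProb hδ hδp ?_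
  have hle : ∀ j ∈ univ, (if j = b then 0 else (X.1 j : ℕ)) ≤ Y.1 j := by
    intro j _
    split_ifs with h
    exacts [Nat.zero_le _, hXY j h]
  rw [sum_tsub_distrib _ hle, Y.2]
  have := val_add_sum_ite_ne X b
  omega

lemma transPow_nonneg {p : Fin n → ℝ} (hp : ∀ i, 0 ≤ p i) {σ : Config n m → Fin n → ℝ}
    (hσ : ∀ X b, 0 ≤ σ X b) (k : ℕ) (X Y : Config n m) : 0 ≤ transPow p σ k X Y := by
  induction k generalizing X with
  | zero => unfold transPow; split <;> norm_num
  | succ k ih =>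
    exact sum_nonneg fun Z _ => mul_nonneg
      (sum_nonneg fun b _ => mul_nonneg (hσ X b) (rethrowProb_nonneg hp X b Z)) (ih Z)

lemma transPow_succ_eq_sum (p : Fin n → ℝ) (σ : Config n m → Fin n → ℝ) (k : ℕ)
    (X Y : Config n m) :
    transPow p σ (k + 1) X Y = ∑ b, σ X b * ∑ Z, rethrowProb p X b Z * transPow p σ k Z Y := by
  simp only [transPow, transStep_eq_sum_rethrowProb, sum_mul, mul_sum, mul_assoc]
  exact sum_comm

lemma le_sum_mul_of_sum_eq_one {ι : Type*} [Fintype ι] {w f : ι → ℝ} {a : ℝ}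
    (hw0 : ∀ i, 0 ≤ w i) (hw1 : ∑ i, w i = 1) (h : ∀ i, w i ≠ 0 → a ≤ f i) :
    a ≤ ∑ i, w i * f i :=
  calc a = ∑ i, w i * a := by rw [← sum_mul, hw1, one_mul]
    _ ≤ ∑ i, w i * f i := sum_le_sum fun i _ => by
        rcases eq_or_ne (w i) 0 with hi | hi
        · simp [hi]
        · exact mul_le_mul_of_nonneg_left (h i hi) (hw0 i)

lemma mul_le_transPow_succ {p : Fin n → ℝ} (hp : ∀ i, 0 ≤ p i) {σ : Config n m → Fin n → ℝ}
    (hσ : IsStrategy σ) {a c : ℝ} (hc : 0 ≤ c) {k : ℕ} {X Y : Config n m}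
    (h : ∀ b, σ X b ≠ 0 → ∃ W, a ≤ rethrowProb p X b W ∧ c ≤ transPow p σ k W Y) :
    a * c ≤ transPow p σ (k + 1) X Y := by
  rw [transPow_succ_eq_sum]
  refine le_sum_mul_of_sum_eq_one (hσ.1 X) (hσ.2.1 X) fun b hb => ?_
  obtain ⟨W, haW, hcW⟩ := h b hb
  calc a * c ≤ rethrowProb p X b W * transPow p σ k W Y :=
        mul_le_mul haW hcW hc (rethrowProb_nonneg hp X b W)
    _ ≤ ∑ Z, rethrowProb p X b Z * transPow p σ k Z Y :=
        single_le_sum (fun Z _ => mul_nonneg (rethrowProb_nonneg hp X b Z)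
          (transPow_nonneg hp hσ.1 k Z Y)) (mem_univ W)

def occupied (X : Config n m) : Finset (Fin n) :=
  univ.filter fun j => (X.1 j : ℕ) ≠ 0

lemma mem_occupied {X : Config n m} {j : Fin n} : j ∈ occupied X ↔ (X.1 j : ℕ) ≠ 0 := by
  simp [occupied]

lemma occupied_nonempty (hm : 0 < m) (X : Config n m) : (occupied X).Nonempty := by
  obtain ⟨j, -, hj⟩ := exists_ne_zero_of_sum_ne_zero (X.2.trans_ne hm.ne')
  exact ⟨j, mem_occupied.2 hj⟩

lemma card_occupied_le_min (X : Config n m) : #(occupied X) ≤ min m n := by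
  refine le_min ?_ (card_le_univ _ |>.trans_eq (Fintype.card_fin n))
  calc #(occupied X) = ∑ j ∈ occupied X, 1 := card_eq_sum_ones _
    _ ≤ ∑ j ∈ occupied X, (X.1 j : ℕ) :=
        sum_le_sum fun j hj => Nat.one_le_iff_ne_zero.2 (mem_occupied.1 hj)
    _ ≤ ∑ j, (X.1 j : ℕ) := sum_le_sum_of_subset (subset_univ _)
    _ = m := X.2

def ofSum (v : Fin n → ℕ) (hv : ∑ j, v j = m) : Config n m :=
  ⟨fun j => ⟨v j, Nat.lt_succ_of_le (hv ▸ single_le_sum (fun i _ => Nat.zero_le _) (mem_univ j))⟩,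
    by simpa using hv⟩

def moveBin (X : Config n m) (b c : Fin n) : Config n m :=
  ofSum (fun j => (if j = c then (X.1 b : ℕ) else 0) + if j = b then 0 else (X.1 j : ℕ)) (by
    rw [sum_add_distrib, sum_ite_eq', if_pos (mem_univ c)]
    exact val_add_sum_ite_ne X b)

lemma le_moveBin (X : Config n m) {b : Fin n} (c : Fin n) {j : Fin n} (hj : j ≠ b) :
    (X.1 j : ℕ) ≤ ((moveBin X b c).1 j : ℕ) := by
  simp [moveBin, ofSum, hj]

lemma card_occupied_moveBin_lt {X : Config n m} {b c : Fin n} (hbc : b ≠ c)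
    (hb : b ∈ occupied X) (hc : c ∈ occupied X) :
    #(occupied (moveBin X b c)) < #(occupied X) := by
  refine (card_le_card fun j hj => ?_).trans_lt (card_erase_lt_of_mem hb)
  rw [mem_occupied] at hj
  rw [mem_erase]
  by_cases hjb : j = b
  · subst hjb; simp [moveBin, ofSum, hbc] at hj
  by_cases hjc : j = c
  · subst hjc; exact ⟨hjb, hc⟩
  · simp only [moveBin, ofSum, hjb, hjc, if_false, zero_add] at hj
    exact ⟨hjb, mem_occupied.2 hj⟩

section

variable {p : Fin n → ℝ} {δ : ℝ} {σ : Config n m → Fin n → ℝ}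

lemma pow_le_transStep_self (hδ0 : 0 ≤ δ) (hδ1 : δ ≤ 1) (hδp : ∀ j, δ ≤ p j)
    (hσ : IsStrategy σ) (X : Config n m) : δ ^ m ≤ transStep p σ X X := by
  rw [transStep_eq_sum_rethrowProb]
  exact le_sum_mul_of_sum_eq_one (hσ.1 X) (hσ.2.1 X) fun b _ =>
    (pow_le_pow_of_le_one hδ0 hδ1 (Fin.is_le _)).trans
      (pow_le_rethrowProb hδ0 hδp fun _ _ => le_rfl)

theorem pow_le_transPow (hδ0 : 0 ≤ δ) (hδ1 : δ ≤ 1) (hδp : ∀ j, δ ≤ p j)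
    (hσ : IsStrategy σ) (Y : Config n m) {k : ℕ} (hk : 1 ≤ k) (X : Config n m)
    (hX : #(occupied X) ≤ k) : (δ ^ m) ^ k ≤ transPow p σ k X Y := by
  have hp : ∀ j, 0 ≤ p j := fun j => hδ0.trans (hδp j)
  have hδm : ∀ (X : Config n m) b, δ ^ m ≤ δ ^ (X.1 b : ℕ) := fun X b =>
    pow_le_pow_of_le_one hδ0 hδ1 (Fin.is_le _)
  induction k, hk using Nat.le_induction generalizing X with
  | base =>
    rw [pow_one, ← mul_one (δ ^ m)]
    refine mul_le_transPow_succ hp hσ zero_le_one fun b hb => ⟨Y, ?_, by simp [transPow]⟩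
    have hXb := mem_occupied.2 (hσ.2.2 X b hb)
    refine (hδm X b).trans (pow_le_rethrowProb hδ0 hδp fun j hj => ?_)
    have hXj : (X.1 j : ℕ) = 0 := by
      by_contra hXj
      exact hj (card_le_one.1 hX j (mem_occupied.2 hXj) b hXb)
    omega
  | succ k hk ih =>
    rw [pow_succ']
    refine mul_le_transPow_succ hp hσ (by positivity) fun b hb => ?_
    have hXb := mem_occupied.2 (hσ.2.2 X b hb)
    by_cases hXk : #(occupied X) ≤ k
    · exact ⟨X, (hδm X b).trans (pow_le_rethrowProb hδ0 hδp fun _ _ => le_rfl), ih X hXk⟩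
    · obtain ⟨c, hc, hcb⟩ := exists_mem_ne (by omega : 1 < #(occupied X)) b
      refine ⟨moveBin X b c,
        (hδm X b).trans (pow_le_rethrowProb hδ0 hδp fun j hj => le_moveBin X c hj), ih _ ?_⟩
      have := card_occupied_moveBin_lt hcb.symm hXb hc
      omega

end

end Recycling

theorem recycling_ergodic_general (n m : ℕ) (hm : 0 < m)
    (p : Fin n → ℝ) (hp : ∀ i, 0 < p i) :
    ∃ ε : ℝ, 0 < ε ∧
      ∀ σ : Config n m → Fin n → ℝ, IsStrategy σ →
        (∀ X Y : Config n m, ∃ k : ℕ, 1 ≤ k ∧ k ≤ min m n ∧ ε ≤ transPow p σ k X Y) ∧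
        (∀ X : Config n m, 0 < transStep p σ X X) := by
  obtain ⟨δ, hδ0, hδ1, hδp⟩ := Recycling.exists_pos_le_one_forall_le hp
  refine ⟨(δ ^ m) ^ min m n, by positivity, fun σ hσ => ⟨fun X Y => ?_, fun X => ?_⟩⟩
  · have hocc_pos : 0 < #(Recycling.occupied X) := card_pos.2 (Recycling.occupied_nonempty hm X)
    have hocc_le := Recycling.card_occupied_le_min X
    exact ⟨min m n, by omega, le_rfl,
      Recycling.pow_le_transPow hδ0.le hδ1 hδp hσ Y (by omega) X hocc_le⟩
  · exact (pow_pos hδ0 m).trans_le (Recycling.pow_le_transStep_self hδ0.le hδ1 hδp hσ X)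

/-- Ergodicity of ball recycling: there is an `ε > 0`, independent of the strategy,
such that for every recycling strategy and all configurations `X, Y`, the chain moves
from `X` to `Y` within `min m n` steps with probability at least `ε`; moreover every
configuration transitions to itself in one step with positive probability. -/
theorem recycling_ergodic (n m : ℕ) (hn : 0 < n) (hm : 0 < m)
    (p : Fin n → ℝ) (hp : ∀ i, 0 < p i) (hp1 : ∑ i, p i = 1) :
    ∃ ε : ℝ, 0 < ε ∧
      ∀ σ : Config n m → Fin n → ℝ, IsStrategy σ →
        (∀ X Y : Config n m, ∃ k : ℕ, 1 ≤ k ∧ k ≤ min m n ∧ ε ≤ transPow p σ k X Y) ∧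
        (∀ X : Config n m, 0 < transStep p σ X X) :=
  recycling_ergodic_general n m hm p hp
end
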